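/- Let φ : ℝᵈ → ℝ satisfy D^β φ(y) = O(1 + |y|^{t - |β| - d - α}) on B_R \ B_h for |β| = 2, where t = 4, α ∈ (0,2), and B_r = [-r, r]ᵈ. Then for the composite trapezoidal rule on a grid of spacing h partitioning B_R \ B_h into cubes {Ω_ℓ} of side h, the total quadrature error obeys Σ_ℓ C h^{d+2} Σ_{|β|=2} ‖D^β φ‖_{L∞(Ω_ℓ)} ≤ C' h², where C, C' are independent of h. -/

import Mathlib

open scoped BigOperators

/-- First-order partial derivative in coordinate direction `i`. -/
noncomputable def pd {d : ℕ} (i : Fin d) (f : EuclideanSpace ℝ (Fin d) → ℝ) :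
    EuclideanSpace ℝ (Fin d) → ℝ :=
  fun x => fderiv ℝ f x (EuclideanSpace.single i 1)

/-- Multi-index partial derivative `D^β`. -/
noncomputable def Dm {d : ℕ} (β : Fin d → ℕ) (f : EuclideanSpace ℝ (Fin d) → ℝ) :
    EuclideanSpace ℝ (Fin d) → ℝ :=
  (List.finRange d).foldr (fun i g => (pd i)^[β i] g) f

/-- The closed grid cube `Ω_ℓ = ∏ᵢ [h ℓᵢ, h (ℓᵢ+1)]` of side `h`. -/
def gridCube (d : ℕ) (h : ℝ) (ℓ : Fin d → ℤ) : Set (EuclideanSpace ℝ (Fin d)) :=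
  {y | ∀ i, h * (ℓ i : ℝ) ≤ y i ∧ y i ≤ h * ((ℓ i : ℝ) + 1)}

/-- The cube `B_r = [-r, r]^d`. -/
def box (d : ℕ) (r : ℝ) : Set (EuclideanSpace ℝ (Fin d)) :=
  {y | ∀ i, |y i| ≤ r}

/-!
Index the cube `Ω_ℓ` by its shell number `m = max_i min(|ℓ_i|, |ℓ_i + 1|)`. Every point of `Ω_ℓ`
has norm at least `h m`, cubes avoiding `B_h` have `m ≥ 1`, cubes inside `B_R` have `m ≤ R / h`,
and shell `k` holds `O(k^(d-1))` cubes. With `p = 2 - α`, the singular part of the error is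
therefore `≲ h^(d+2) Σ_{k ≤ R/h} k^(d-1) (h k)^(p-d) = h^(p+2) Σ_k k^(p-1) ≲ R^p h²`, where
`Σ_{k ≤ N} k^(p-1) = O(N^p)` because `p > 0` (for `p ≤ 1` by telescoping Bernoulli's inequality
`k^p - (k-1)^p ≥ p k^(p-1)`). The same count with `p = d` bounds the number of cubes by
`O((R/h)^d)`, which handles the bounded part of the majorant.
-/

open Finset hiding box

lemma rpow_sub_one_mul_le_rpow_sub_rpow {p x : ℝ} (hp0 : 0 ≤ p) (hp1 : p ≤ 1) (hx : 1 ≤ x) :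
    p * x ^ (p - 1) ≤ x ^ p - (x - 1) ^ p := by
  have hx0 : 0 < x := by linarith
  have hinv : x⁻¹ ≤ 1 := inv_le_one_of_one_le₀ hx
  have bernoulli := rpow_one_add_le_one_add_mul_self (s := -x⁻¹) (by linarith) hp0 hp1
  have hsplit : (x - 1) ^ p = x ^ p * (1 + -x⁻¹) ^ p := by
    rw [← Real.mul_rpow hx0.le (by linarith)]
    congr 1
    field_simp
    ring
  rw [hsplit, Real.rpow_sub_one hx0.ne']
  have : x ^ p * (1 + -x⁻¹) ^ p ≤ x ^ p * (1 + p * -x⁻¹) :=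
    mul_le_mul_of_nonneg_left bernoulli (by positivity)
  have : x ^ p * (1 + p * -x⁻¹) = x ^ p - p * (x ^ p / x) := by field_simp; ring
  linarith

lemma sum_Icc_rpow_sub_one_le {p : ℝ} (hp : 0 < p) (N : ℕ) :
    ∑ k ∈ Icc 1 N, (k : ℝ) ^ (p - 1) ≤ (1 + p⁻¹) * (N : ℝ) ^ p := by
  rcases le_or_gt p 1 with hp1 | hp1
  · have hsum : ∀ n : ℕ, ∑ k ∈ Icc 1 n, (k : ℝ) ^ (p - 1) ≤ (n : ℝ) ^ p / p := by
      intro n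
      induction n with
      | zero => simp [Real.zero_rpow hp.ne']
      | succ n ih =>
        rw [sum_Icc_succ_top (by omega)]
        have step := rpow_sub_one_mul_le_rpow_sub_rpow hp.le hp1
          (by exact_mod_cast Nat.le_add_left 1 n : (1 : ℝ) ≤ (n + 1 : ℕ))
        push_cast at step ⊢
        rw [add_sub_cancel_right] at step
        rw [le_div_iff₀ hp] at ih ⊢
        nlinarith
    calc _ ≤ (N : ℝ) ^ p / p := hsum N
      _ ≤ (1 + p⁻¹) * (N : ℝ) ^ p := by
        rw [div_eq_inv_mul]; gcongr; linarith
  · calc ∑ k ∈ Icc 1 N, (k : ℝ) ^ (p - 1) ≤ ∑ _k ∈ Icc 1 N, (N : ℝ) ^ (p - 1) := by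
          gcongr with k hk
          exact (mem_Icc.mp hk).2
      _ = (N : ℝ) ^ p := by
          rcases N.eq_zero_or_pos with rfl | hN
          · simp [Real.zero_rpow hp.ne']
          rw [sum_const, Nat.card_Icc, nsmul_eq_mul, Real.rpow_sub_one (by positivity)]
          field_simp; simp
      _ ≤ (1 + p⁻¹) * (N : ℝ) ^ p := by
          have : 0 ≤ p⁻¹ * (N : ℝ) ^ p := by positivity
          linarith

/-- `cellDist z = min |z| |z + 1|`, the number of whole cells between `[z, z + 1]` and `0`. -/
def cellDist (z : ℤ) : ℕ := if 0 ≤ z then z.toNat else (-z - 1).toNat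

def shell {d : ℕ} (ℓ : Fin d → ℤ) : ℕ := univ.sup fun i => cellDist (ℓ i)

lemma cellDist_le_iff {z : ℤ} {k : ℕ} : cellDist z ≤ k ↔ -(k : ℤ) - 1 ≤ z ∧ z ≤ k := by
  unfold cellDist; split_ifs <;> omega

lemma shell_le_iff {d k : ℕ} {ℓ : Fin d → ℤ} :
    shell ℓ ≤ k ↔ ∀ i, -(k : ℤ) - 1 ≤ ℓ i ∧ ℓ i ≤ k := by
  simp only [shell, Finset.sup_le_iff, mem_univ, true_implies, cellDist_le_iff]

lemma mul_cellDist_le_abs {h x : ℝ} {z : ℤ} (hlo : h * z ≤ x)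
    (hhi : x ≤ h * (z + 1)) : h * cellDist z ≤ |x| := by
  unfold cellDist
  split_ifs with hz
  · rw [show ((z.toNat : ℕ) : ℝ) = z by exact_mod_cast Int.toNat_of_nonneg hz]
    exact hlo.trans (le_abs_self x)
  · rw [show (((-z - 1).toNat : ℕ) : ℝ) = ((-z - 1 : ℤ) : ℝ) by
      exact_mod_cast Int.toNat_of_nonneg (by omega : 0 ≤ -z - 1)]
    push_cast
    linarith [neg_abs_le x]

section

variable {d : ℕ} {h R : ℝ} {ℓ : Fin d → ℤ}

lemma mul_shell_le_norm {y : EuclideanSpace ℝ (Fin d)} (hy : y ∈ gridCube d h ℓ) :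
    h * shell ℓ ≤ ‖y‖ := by
  rcases (univ : Finset (Fin d)).eq_empty_or_nonempty with hempty | hne
  · simp [shell, hempty]
  obtain ⟨i, -, hi⟩ := exists_mem_eq_sup univ hne fun i => cellDist (ℓ i)
  rw [shell, hi]
  exact (mul_cellDist_le_abs (hy i).1 (hy i).2).trans (PiLp.norm_apply_le y i)

lemma norm_le_of_mem_box (hR : 0 ≤ R) {y : EuclideanSpace ℝ (Fin d)} (hy : y ∈ box d R) :
    ‖y‖ ≤ √d * R := by
  rw [EuclideanSpace.norm_eq, ← Real.sqrt_sq hR, ← Real.sqrt_mul (Nat.cast_nonneg d)]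
  gcongr
  calc ∑ i, ‖y i‖ ^ 2 ≤ ∑ _i : Fin d, R ^ 2 := by
        gcongr with i
        exact (Real.norm_eq_abs _).trans_le (hy i)
    _ = d * R ^ 2 := by simp

lemma corner_mem_gridCube (hh : 0 ≤ h) (ℓ : Fin d → ℤ) :
    WithLp.toLp 2 (fun i => h * ℓ i) ∈ gridCube d h ℓ :=
  fun i => ⟨le_rfl, by nlinarith⟩

lemma one_le_shell (hh : 0 ≤ h) (hsub : gridCube d h ℓ ⊆ box d R \ box d h) : 1 ≤ shell ℓ := by
  by_contra! hzero
  refine (hsub (corner_mem_gridCube hh ℓ)).2 fun i => ?_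
  have hi := shell_le_iff.mp (Nat.lt_one_iff.mp hzero).le i
  have : |(ℓ i : ℝ)| ≤ 1 := abs_le.mpr ⟨by exact_mod_cast (by omega : -1 ≤ ℓ i),
    by exact_mod_cast (by omega : ℓ i ≤ 1)⟩
  simp only [abs_mul, abs_of_nonneg hh]
  nlinarith

lemma shell_le_floor (hh : 0 < h) (hsub : gridCube d h ℓ ⊆ box d R) : shell ℓ ≤ ⌊R / h⌋₊ := by
  refine shell_le_iff.mpr fun i => ?_
  have hcorner : |h * ℓ i| ≤ R := hsub (corner_mem_gridCube hh.le ℓ) i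
  have : (ℓ i).natAbs ≤ ⌊R / h⌋₊ := Nat.le_floor <| by
    rw [Nat.cast_natAbs, Int.cast_abs, le_div_iff₀ hh]
    rwa [abs_mul, abs_of_pos hh, mul_comm] at hcorner
  omega

lemma card_filter_shell_eq_le (hd : 0 < d) (s : Finset (Fin d → ℤ)) (k : ℕ) :
    #{ℓ ∈ s | shell ℓ = k} ≤ 2 * d * (2 * k + 2) ^ (d - 1) := by
  set cube : Finset ℤ := Icc (-(k : ℤ) - 1) k
  set face : Fin d → Finset (Fin d → ℤ) :=
    fun i => Fintype.piFinset (Function.update (fun _ => cube) i {(k : ℤ), -(k : ℤ) - 1})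
  have hsub : {ℓ ∈ s | shell ℓ = k} ⊆ univ.biUnion face := by
    intro ℓ hℓ
    have hk : shell ℓ = k := (mem_filter.mp hℓ).2
    have : Nonempty (Fin d) := Fin.pos_iff_nonempty.mp hd
    obtain ⟨i, -, hi⟩ := exists_mem_eq_sup univ univ_nonempty fun i => cellDist (ℓ i)
    have hbox := shell_le_iff.mp hk.le
    refine mem_biUnion.mpr ⟨i, mem_univ i, Fintype.mem_piFinset.mpr fun j => ?_⟩
    rcases eq_or_ne j i with rfl | hji
    · have : cellDist (ℓ j) = k := hi ▸ hk
      unfold cellDist at this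
      simp only [Function.update_self, mem_insert, mem_singleton]
      split_ifs at this <;> omega
    · simpa [Function.update_of_ne hji, cube] using hbox j
  have hface : ∀ i, #(face i) = 2 * (2 * k + 2) ^ (d - 1) := by
    intro i
    have hcube : #cube = 2 * k + 2 := by simp only [cube, Int.card_Icc]; omega
    have hpair : #({(k : ℤ), -(k : ℤ) - 1} : Finset ℤ) = 2 :=
      card_pair (by omega)
    rw [Fintype.card_piFinset, prod_eq_mul_prod_sdiff_singleton_of_mem (mem_univ i),
      Function.update_self, hpair,
      prod_congr rfl fun j hj => by rw [Function.update_of_ne (by simpa using hj), hcube]]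
    simp [card_sdiff]
  calc #{ℓ ∈ s | shell ℓ = k} ≤ #(univ.biUnion face) := card_le_card hsub
    _ ≤ ∑ i, #(face i) := card_biUnion_le
    _ = 2 * d * (2 * k + 2) ^ (d - 1) := by simp only [hface]; simp; ring

lemma sum_shell_rpow_le (hd : 0 < d) {p : ℝ} (hp : 0 < p) (N : ℕ) (s : Finset (Fin d → ℤ))
    (hs : ∀ ℓ ∈ s, 1 ≤ shell ℓ ∧ shell ℓ ≤ N) :
    ∑ ℓ ∈ s, (shell ℓ : ℝ) ^ (p - d) ≤ 2 * d * 4 ^ (d - 1) * (1 + p⁻¹) * (N : ℝ) ^ p := by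
  calc ∑ ℓ ∈ s, (shell ℓ : ℝ) ^ (p - d)
      = ∑ k ∈ Icc 1 N, #{ℓ ∈ s | shell ℓ = k} * (k : ℝ) ^ (p - d) := by
        rw [← sum_fiberwise_of_maps_to (g := shell) fun ℓ hℓ => mem_Icc.mpr (hs ℓ hℓ)]
        refine sum_congr rfl fun k _ => ?_
        rw [sum_congr rfl fun ℓ hℓ => by rw [(mem_filter.mp hℓ).2], sum_const, nsmul_eq_mul]
    _ ≤ ∑ k ∈ Icc 1 N, (2 * d * 4 ^ (d - 1) : ℝ) * (k : ℝ) ^ (p - 1) := by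
        refine sum_le_sum fun k hk => ?_
        have hk1 : (1 : ℝ) ≤ k := by exact_mod_cast (mem_Icc.mp hk).1
        have hcount : (#{ℓ ∈ s | shell ℓ = k} : ℝ) ≤ 2 * d * 4 ^ (d - 1) * (k : ℝ) ^ (d - 1) :=
          calc (#{ℓ ∈ s | shell ℓ = k} : ℝ) ≤ 2 * d * (2 * k + 2) ^ (d - 1) := by
                exact_mod_cast card_filter_shell_eq_le hd s k
            _ ≤ 2 * d * (4 * k) ^ (d - 1) := by gcongr; linarith
            _ = 2 * d * 4 ^ (d - 1) * (k : ℝ) ^ (d - 1) := by rw [mul_pow]; ring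
        calc _ ≤ 2 * d * 4 ^ (d - 1) * (k : ℝ) ^ (d - 1) * (k : ℝ) ^ (p - d) := by gcongr
          _ = _ := by
            rw [mul_assoc _ ((k : ℝ) ^ (d - 1)), ← Real.rpow_natCast (k : ℝ),
              ← Real.rpow_add (by linarith), Nat.cast_sub hd]
            ring_nf
    _ ≤ 2 * d * 4 ^ (d - 1) * (1 + p⁻¹) * (N : ℝ) ^ p := by
        rw [← mul_sum, mul_assoc _ (1 + p⁻¹)]
        exact mul_le_mul_of_nonneg_left (sum_Icc_rpow_sub_one_le hp N) (by positivity)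

lemma exists_sum_gridCube_le (hd : 0 < d) (R : ℝ) {p : ℝ} (hp : 0 < p) :
    ∃ C₀ : ℝ, ∀ h : ℝ, 0 < h → h ≤ R →
      ∀ s : Finset {ℓ : Fin d → ℤ // gridCube d h ℓ ⊆ box d R \ box d h},
      ∑ ℓ ∈ s, h ^ (d + 2) * (1 + (√d * R) ^ (p - d) + (h * shell ℓ.1) ^ (p - d)) ≤
        C₀ * h ^ 2 := by
  set A : ℝ := 1 + (√d * R) ^ (p - d)
  set c : ℝ → ℝ := fun q => 2 * d * 4 ^ (d - 1) * (1 + q⁻¹)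
  refine ⟨A * c d * R ^ d + c p * R ^ p, fun h hh hhR s => ?_⟩
  have hR : 0 < R := hh.trans_le hhR
  refine (sum_map s (Function.Embedding.subtype _) fun ℓ =>
    h ^ (d + 2) * (A + (h * shell ℓ) ^ (p - d))).symm.trans_le ?_
  set t := s.map (Function.Embedding.subtype _)
  set N := ⌊R / h⌋₊
  have hshell : ∀ ℓ ∈ t, 1 ≤ shell ℓ ∧ shell ℓ ≤ N := by
    intro ℓ hℓ
    obtain ⟨⟨ℓ, hsub⟩, -, rfl⟩ := mem_map.mp hℓ
    exact ⟨one_le_shell hh.le hsub, shell_le_floor hh (hsub.trans Set.sdiff_subset)⟩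
  have hNh : (N : ℝ) * h ≤ R := (le_div_iff₀ hh).mp (Nat.floor_le (by positivity))
  -- `shell ℓ ^ (d - d) = 1`: the number of cubes is the case `p = d` of `sum_shell_rpow_le`.
  have hterm : ∀ ℓ ∈ t, h ^ (d + 2) * (A + (h * shell ℓ) ^ (p - d)) =
      h ^ 2 * (A * h ^ d * (shell ℓ : ℝ) ^ ((d : ℝ) - d) + h ^ p * (shell ℓ : ℝ) ^ (p - d)) := by
    intro ℓ _
    rw [sub_self, Real.rpow_zero, Real.mul_rpow hh.le (Nat.cast_nonneg _),
      Real.rpow_sub hh, Real.rpow_natCast]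
    field_simp
    ring
  calc ∑ ℓ ∈ t, h ^ (d + 2) * (A + (h * shell ℓ) ^ (p - d))
      = h ^ 2 * (A * h ^ d * ∑ ℓ ∈ t, (shell ℓ : ℝ) ^ ((d : ℝ) - d)
          + h ^ p * ∑ ℓ ∈ t, (shell ℓ : ℝ) ^ (p - d)) := by
        rw [sum_congr rfl hterm, ← mul_sum, sum_add_distrib, ← mul_sum, ← mul_sum]
    _ ≤ h ^ 2 * (A * h ^ d * (c d * (N : ℝ) ^ (d : ℝ)) + h ^ p * (c p * (N : ℝ) ^ p)) := by
        gcongr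
        · exact sum_shell_rpow_le hd (Nat.cast_pos.mpr hd) N t hshell
        · exact sum_shell_rpow_le hd hp N t hshell
    _ = h ^ 2 * (A * c d * (N * h) ^ d + c p * (N * h) ^ p) := by
        rw [Real.rpow_natCast, Real.mul_rpow (Nat.cast_nonneg _) hh.le]
        ring
    _ ≤ (A * c d * R ^ d + c p * R ^ p) * h ^ 2 := by
        rw [mul_comm]
        gcongr

lemma rpow_le_rpow_add_rpow {a b x E : ℝ} (ha : 0 < a) (hax : a ≤ x) (hxb : x ≤ b) :
    x ^ E ≤ b ^ E + a ^ E := by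
  rcases le_total E 0 with hE | hE
  · linarith [Real.rpow_le_rpow_of_nonpos ha hax hE,
      Real.rpow_nonneg (ha.le.trans (hax.trans hxb)) E]
  · linarith [Real.rpow_le_rpow (ha.le.trans hax) hxb hE, Real.rpow_nonneg ha.le E]

lemma sSup_image_gridCube_le {f : EuclideanSpace ℝ (Fin d) → ℝ} {K E : ℝ} (hh : 0 < h)
    (hR : 0 ≤ R) (hf : ∀ y ∈ box d R, y ≠ 0 → |f y| ≤ K * (1 + ‖y‖ ^ E))
    (hsub : gridCube d h ℓ ⊆ box d R \ box d h) :
    sSup ((fun y => |f y|) '' gridCube d h ℓ) ≤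
      |K| * (1 + (√d * R) ^ E + (h * shell ℓ) ^ E) := by
  refine csSup_le ((Set.nonempty_of_mem (corner_mem_gridCube hh.le ℓ)).image _) ?_
  rintro _ ⟨y, hy, rfl⟩
  have hshell : h * shell ℓ ≤ ‖y‖ := mul_shell_le_norm hy
  have hpos : 0 < h * shell ℓ := mul_pos hh (by exact_mod_cast one_le_shell hh.le hsub)
  have hy0 : y ≠ 0 := norm_pos_iff.mp (hpos.trans_le hshell)
  have hnorm := rpow_le_rpow_add_rpow (E := E) hpos hshell (norm_le_of_mem_box hR (hsub hy).1)
  calc |f y| ≤ K * (1 + ‖y‖ ^ E) := hf y (hsub hy).1 hy0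
    _ ≤ |K| * (1 + ‖y‖ ^ E) := by gcongr; exact le_abs_self K
    _ ≤ |K| * (1 + (√d * R) ^ E + (h * shell ℓ) ^ E) :=
      mul_le_mul_of_nonneg_left (by linarith) (abs_nonneg K)

end

theorem stmt14_general {d : ℕ} (hd : 0 < d) (α R C K : ℝ) (hα : α ∈ Set.Ioo (0 : ℝ) 2)
    (hC : 0 ≤ C)
    (φ : EuclideanSpace ℝ (Fin d) → ℝ)
    (hφ : ∀ β : Fin d → ℕ, (∑ i, β i) = 2 →
      ∀ y ∈ box d R, y ≠ 0 →
        |Dm β φ y| ≤ K * (1 + ‖y‖ ^ ((4 : ℝ) - 2 - d - α))) :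
    ∃ C' : ℝ, ∀ h : ℝ, 0 < h → h ≤ R →
      (∑' ℓ : {ℓ : Fin d → ℤ // gridCube d h ℓ ⊆ box d R \ box d h},
        C * h ^ (d + 2) *
          ∑ β ∈ Finset.univ.filter (fun β : Fin d → Fin 3 => (∑ i, (β i : ℕ)) = 2),
            sSup ((fun y => |Dm (fun i => (β i : ℕ)) φ y|) '' gridCube d h ℓ.1))
      ≤ C' * h ^ 2 := by
  have hE : (4 : ℝ) - 2 - d - α = (2 - α) - d := by ring
  simp only [hE] at hφ
  obtain ⟨C₀, hC₀⟩ := exists_sum_gridCube_le hd R (p := 2 - α) (by linarith [hα.2])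
  set B := univ.filter (fun β : Fin d → Fin 3 => (∑ i, (β i : ℕ)) = 2)
  refine ⟨C * #B * |K| * C₀, fun h hh hhR => ?_⟩
  have hfinite : ∀ s : Finset {ℓ : Fin d → ℤ // gridCube d h ℓ ⊆ box d R \ box d h},
      ∑ ℓ ∈ s, C * h ^ (d + 2) *
        ∑ β ∈ B, sSup ((fun y => |Dm (fun i => (β i : ℕ)) φ y|) '' gridCube d h ℓ.1)
        ≤ C * #B * |K| * C₀ * h ^ 2 := fun s =>
    calc _ ≤ ∑ ℓ ∈ s, C * h ^ (d + 2) * (#B *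
            (|K| * (1 + (√d * R) ^ ((2 - α) - d) + (h * shell ℓ.1) ^ ((2 - α) - d)))) := by
          gcongr with ℓ
          rw [← nsmul_eq_mul]
          exact sum_le_card_nsmul _ _ _ fun β hβ => sSup_image_gridCube_le hh (hh.le.trans hhR)
            (hφ _ (mem_filter.mp hβ).2) ℓ.2
      _ = C * #B * |K| * ∑ ℓ ∈ s,
            h ^ (d + 2) * (1 + (√d * R) ^ ((2 - α) - d) + (h * shell ℓ.1) ^ ((2 - α) - d)) := by
          rw [mul_sum]
          exact sum_congr rfl fun _ _ => by ring
      _ ≤ C * #B * |K| * (C₀ * h ^ 2) := by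
          gcongr
          exact hC₀ h hh hhR s
      _ = C * #B * |K| * C₀ * h ^ 2 := by ring
  exact tsum_le_of_sum_le' (by simpa using hfinite ∅) hfinite

theorem stmt14 {d : ℕ} (hd : 0 < d) (α R C K : ℝ) (hα : α ∈ Set.Ioo (0 : ℝ) 2)
    (hR : 0 < R) (hC : 0 ≤ C)
    (φ : EuclideanSpace ℝ (Fin d) → ℝ)
    (hφ : ∀ β : Fin d → ℕ, (∑ i, β i) = 2 →
      ∀ y ∈ box d R, y ≠ 0 →
        |Dm β φ y| ≤ K * (1 + ‖y‖ ^ ((4 : ℝ) - 2 - d - α))) :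
    ∃ C' : ℝ, ∀ h : ℝ, 0 < h → h ≤ R →
      (∑' ℓ : {ℓ : Fin d → ℤ // gridCube d h ℓ ⊆ box d R \ box d h},
        C * h ^ (d + 2) *
          ∑ β ∈ Finset.univ.filter (fun β : Fin d → Fin 3 => (∑ i, (β i : ℕ)) = 2),
            sSup ((fun y => |Dm (fun i => (β i : ℕ)) φ y|) '' gridCube d h ℓ.1))
      ≤ C' * h ^ 2 :=
  stmt14_general hd α R C K hα hC φ hφ
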